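/- Let n ≥ 1, let K be a symmetric positive definite n×n real matrix, let S be a symmetric n×n real matrix, and let r ∈ {1,…,n}. Let K′ be the rerooted matrix associated to K and r, and S′ the rerooted sample matrix associated to S and r. Then the log-likelihood values agree: log det K − tr(S K) = log det K′ − tr(S′ K′). -/

import Mathlib

/-!
Rerooting is a linear change of coordinates. With `A` the identity matrix whose `r`-th row is
replaced by `(-1, …, -1)`, symmetry of `K` and `S` gives `K′ = A K Aᵀ` and `S′ = Aᵀ S A`.
Since `A` is an involution, `det A = ±1`, so `det K′ = det K`, and
`tr(S′ K′) = tr(Aᵀ (S K) Aᵀ) = tr(S K (Aᵀ)²) = tr(S K)` by cyclicity of the trace.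
-/

open Finset Matrix

/-- The Farris transform coordinates `p` of a symmetric `n × n` matrix
`K = (k_{ij})` (with rows/columns thought of as indexed by `1, …, n`,
realized as `Fin n` via `i ↦ i.succ`), extended by a root index `0`:
`p_{0i} = p_{i0} = ∑_{j=1}^n k_{ij}` and `p_{ij} = −k_{ij}` for `i, j ≥ 1`. -/
noncomputable def farrisP {n : ℕ} (K : Matrix (Fin n) (Fin n) ℝ) :
    Fin (n + 1) → Fin (n + 1) → ℝ := fun i j =>
  Fin.cases (motive := fun _ => ℝ)
    (Fin.cases (motive := fun _ => ℝ) 0 (fun j' => ∑ t, K j' t) j)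
    (fun i' => Fin.cases (motive := fun _ => ℝ) (∑ t, K i' t)
      (fun j' => -K i' j') j) i

/-- The rerooted matrix `K′` associated to a symmetric matrix `K` and a new
root `r ∈ {1, …, n}`:  `K′_{rr} = ∑_{t=1}^n p_{0t}`, `K′_{rj} = K′_{jr} = −p_{0j}`
for `j ≠ r`, `K′_{ii} = ∑_{t=0, t≠i}^n p_{it}` for `i ≠ r`, and
`K′_{ij} = −p_{ij}` for distinct `i, j ≠ r`. -/
noncomputable def rerootK {n : ℕ} (K : Matrix (Fin n) (Fin n) ℝ) (r : Fin n) :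
    Matrix (Fin n) (Fin n) ℝ :=
  Matrix.of fun i j =>
    if i = r then
      (if j = r then ∑ t : Fin n, farrisP K 0 t.succ else -farrisP K 0 j.succ)
    else if j = r then -farrisP K 0 i.succ
    else if i = j then ∑ t ∈ Finset.univ.erase (i.succ : Fin (n + 1)), farrisP K i.succ t
    else -farrisP K i.succ j.succ

/-- The rerooted sample matrix `S′` associated to a symmetric matrix
`S = (s_{ij})` and `r`:  `s′_{rr} = s_{rr}`, `s′_{rj} = s′_{jr} = s_{rr} − s_{rj}`
for `j ≠ r`, `s′_{ii} = s_{rr} + s_{ii} − 2 s_{ri}` for `i ≠ r`, and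
`s′_{ij} = s_{rr} − s_{ri} − s_{rj} + s_{ij}` for distinct `i, j ≠ r`. -/
noncomputable def rerootS {n : ℕ} (S : Matrix (Fin n) (Fin n) ℝ) (r : Fin n) :
    Matrix (Fin n) (Fin n) ℝ :=
  Matrix.of fun i j =>
    if i = r then (if j = r then S r r else S r r - S r j)
    else if j = r then S r r - S r i
    else if i = j then S r r + S i i - 2 * S r i
    else S r r - S r i - S r j + S i j

section RerootMatrix

variable {ι R : Type*} [Fintype ι] [DecidableEq ι] [CommRing R]

def rerootMatrix (r : ι) : Matrix ι ι R :=
  updateRow 1 r (-1)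

theorem rerootMatrix_mul_apply (r : ι) (M : Matrix ι ι R) (i j : ι) :
    (rerootMatrix r * M : Matrix ι ι R) i j = if i = r then -∑ t, M t j else M i j := by
  simp [rerootMatrix, updateRow_mul, updateRow_apply, neg_vecMul, vecMul, dotProduct]

theorem mul_rerootMatrix_transpose_apply (r : ι) (M : Matrix ι ι R) (i j : ι) :
    (M * (rerootMatrix r)ᵀ : Matrix ι ι R) i j = if j = r then -∑ t, M i t else M i j := by
  rw [← transpose_apply (M * _), transpose_mul, transpose_transpose, rerootMatrix_mul_apply]
  rfl

theorem mul_rerootMatrix_apply (r : ι) (M : Matrix ι ι R) (i j : ι) :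
    (M * rerootMatrix r : Matrix ι ι R) i j = (if j = r then 0 else M i j) - M i r := by
  rw [mul_apply, Fintype.sum_eq_add_sum_compl r]
  have hcompl : ∑ t ∈ {r}ᶜ, M i t * rerootMatrix r t j = if j = r then 0 else M i j := by
    rw [Finset.sum_congr rfl fun t ht => by
      rw [rerootMatrix, updateRow_ne (by simpa using ht), one_apply, mul_ite, mul_one, mul_zero]]
    simp [Finset.sum_ite_eq']
  rw [hcompl]
  simp [rerootMatrix, sub_eq_add_neg, add_comm]

theorem rerootMatrix_transpose_mul_apply (r : ι) (M : Matrix ι ι R) (i j : ι) :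
    ((rerootMatrix r)ᵀ * M : Matrix ι ι R) i j = (if i = r then 0 else M i j) - M r j := by
  rw [← transpose_apply (_ * M), transpose_mul, transpose_transpose, mul_rerootMatrix_apply]
  rfl

theorem rerootMatrix_mul_self (r : ι) : rerootMatrix r * rerootMatrix r = (1 : Matrix ι ι R) := by
  ext i j
  rw [mul_rerootMatrix_apply]
  by_cases hi : i = r <;> by_cases hj : j = r <;>
    simp [rerootMatrix, updateRow_apply, one_apply, hi, hj, eq_comm (a := r)]

theorem det_rerootMatrix_mul_transpose (r : ι) (M : Matrix ι ι R) :
    (rerootMatrix r * M * (rerootMatrix r)ᵀ).det = M.det := by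
  have h : (rerootMatrix r : Matrix ι ι R).det * (rerootMatrix r).det = 1 := by
    rw [← det_mul, rerootMatrix_mul_self, det_one]
  rw [det_mul, det_mul, det_transpose, mul_right_comm, h, one_mul]

theorem trace_rerootMatrix_conj_mul (r : ι) (S K : Matrix ι ι R) :
    ((rerootMatrix r)ᵀ * S * rerootMatrix r * (rerootMatrix r * K * (rerootMatrix r)ᵀ)).trace
      = (S * K).trace := by
  have h : (rerootMatrix r)ᵀ * S * rerootMatrix r * (rerootMatrix r * K * (rerootMatrix r)ᵀ)
      = (rerootMatrix r)ᵀ * (S * K) * (rerootMatrix r)ᵀ := by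
    simp only [Matrix.mul_assoc, ← Matrix.mul_assoc (rerootMatrix r) (rerootMatrix r),
      rerootMatrix_mul_self, Matrix.one_mul]
  rw [h, trace_mul_cycle, ← transpose_mul, rerootMatrix_mul_self, transpose_one, Matrix.one_mul]

end RerootMatrix

section Farris

variable {n : ℕ} (K : Matrix (Fin n) (Fin n) ℝ)

@[simp]
theorem farrisP_succ_succ (i j : Fin n) : farrisP K i.succ j.succ = -K i j := rfl

@[simp]
theorem farrisP_zero_succ (j : Fin n) : farrisP K 0 j.succ = ∑ t, K j t := rfl

@[simp]
theorem farrisP_succ_zero (i : Fin n) : farrisP K i.succ 0 = ∑ t, K i t := rfl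

theorem sum_farrisP_succ (i : Fin n) : ∑ t, farrisP K i.succ t = 0 := by
  simp [Fin.sum_univ_succ]

theorem rerootK_eq_conj (hK : K.IsSymm) (r : Fin n) :
    rerootK K r = rerootMatrix r * K * (rerootMatrix r)ᵀ := by
  ext i j
  rw [Matrix.mul_assoc, rerootMatrix_mul_apply]
  simp_rw [mul_rerootMatrix_transpose_apply]
  by_cases hi : i = r <;> by_cases hj : j = r
  · simp [rerootK, hi, hj]
  · simp [rerootK, hi, hj, ← hK.apply j]
  · simp [rerootK, hi, hj]
  · by_cases hij : i = j
    · simp [rerootK, hj, hij, sum_farrisP_succ]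
    · simp [rerootK, hi, hj, hij]

end Farris

theorem rerootS_eq_conj {n : ℕ} (S : Matrix (Fin n) (Fin n) ℝ) (hS : S.IsSymm) (r : Fin n) :
    rerootS S r = (rerootMatrix r)ᵀ * S * rerootMatrix r := by
  ext i j
  rw [mul_rerootMatrix_apply, rerootMatrix_transpose_mul_apply, rerootMatrix_transpose_mul_apply,
    hS.apply r i]
  by_cases hi : i = r <;> by_cases hj : j = r <;> by_cases hij : i = j <;>
    simp [rerootS, hi, hj, hij] <;> ring

theorem loglik_reroot_eq_general {n : ℕ}
    (K : Matrix (Fin n) (Fin n) ℝ) (hK : K.IsSymm)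
    (r : Fin n) (S : Matrix (Fin n) (Fin n) ℝ) (hS : S.IsSymm) :
    Real.log K.det - (S * K).trace
      = Real.log (rerootK K r).det - (rerootS S r * rerootK K r).trace := by
  rw [rerootK_eq_conj K hK, rerootS_eq_conj S hS, det_rerootMatrix_mul_transpose,
    trace_rerootMatrix_conj_mul]

/-- **Invariance of the log-likelihood under rerooting** (Equation (19) in
the proof of Theorem 2).  For a symmetric positive definite matrix `K`, a
symmetric matrix `S` and a root `r ∈ {1, …, n}`,
`log det K − tr(S K) = log det K′ − tr(S′ K′)`. -/
theorem loglik_reroot_eq {n : ℕ} (hn : 1 ≤ n)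
    (K : Matrix (Fin n) (Fin n) ℝ) (hK : K.IsSymm) (hKpd : K.PosDef)
    (r : Fin n) (S : Matrix (Fin n) (Fin n) ℝ) (hS : S.IsSymm) :
    Real.log K.det - (S * K).trace
      = Real.log (rerootK K r).det - (rerootS S r * rerootK K r).trace :=
  loglik_reroot_eq_general K hK r S hS
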